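/- arXiv:0908.3426 — 8 statements merged into one kernel-verified Lean document; each statement's English description precedes it below -/
import Mathlib

section
/- Let L be a real Lie algebra and θ : L → L an involutive Lie algebra automorphism. For a nonzero element x ∈ L, the following are equivalent: (i) there exist h, y ∈ L such that (h, x, y) is an sl₂-triple and θ(x) = −y (i.e., (h, x, y) is a Cayley triple relative to θ with nilpositive element x); (ii) ⁅⁅θ(x), x⁆, x⁆ = 2x. Moreover, when these hold, the Cayley triple is unique: necessarily h = −⁅x, θ(x)⁆ and y = −θ(x). -/
/-- For a nonzero element `x` of a real Lie algebra with an involutive Lie algebra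
automorphism `θ`, there exist `h, y` such that `(h, x, y)` is an `sl₂`-triple with
`θ x = −y` (i.e. a Cayley triple relative to `θ` with nilpositive element `x`)
iff `⁅⁅θ x, x⁆, x⁆ = 2x`; moreover such a Cayley triple is unique, with
`h = −⁅x, θ x⁆` and `y = −θ x`. -/
theorem cayleyTriple_iff_and_unique {L : Type*} [LieRing L] [LieAlgebra ℝ L]
    (θ : L →ₗ⁅ℝ⁆ L) (hθ : Function.Involutive θ)
    (x : L) (hx : x ≠ 0) :
    ((∃ h y : L, IsSl2Triple h x y ∧ θ x = -y) ↔ ⁅⁅θ x, x⁆, x⁆ = (2 : ℝ) • x) ∧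
      (∀ h y : L, IsSl2Triple h x y → θ x = -y → h = -⁅x, θ x⁆ ∧ y = -θ x) := by
  have two_smul_eq : ∀ z : L, (2 : ℝ) • z = (2 : ℕ) • z := fun z => by
    rw [two_smul, two_nsmul]
  constructor
  · constructor
    · rintro ⟨h, y, ht, hxy⟩
      have hy : y = -θ x := by rw [hxy]; abel
      have hh : h = ⁅θ x, x⁆ := by
        rw [← ht.lie_e_f, hy, lie_neg, ← lie_skew, neg_neg]
      rw [two_smul_eq, ← ht.lie_h_e_nsmul, hh]
    · intro hc
      rw [two_smul_eq] at hc
      refine ⟨⁅θ x, x⁆, -θ x, ⟨?_, ?_, hc, ?_⟩, by abel⟩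
      · intro h0
        apply hx
        have h2 : (2 : ℕ) • x = 0 := by rw [← hc, h0, zero_lie]
        rw [← two_smul_eq] at h2
        simpa using smul_eq_zero.mp h2
      · rw [lie_neg, ← lie_skew, neg_neg]
      · have h3 := congrArg θ hc
        rw [LieHom.map_lie, LieHom.map_lie, hθ x, two_nsmul, map_add θ, ← two_nsmul] at h3
        have h4 : ⁅⁅θ x, x⁆, θ x⁆ = -((2:ℕ) • θ x) := by
          rw [← neg_neg ⁅⁅θ x, x⁆, θ x⁆, ← neg_lie, ← lie_skew (θ x) x, neg_neg, h3]
        rw [lie_neg, h4]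
        abel
  · intro h y ht hxy
    have hy : y = -θ x := by rw [hxy]; abel
    refine ⟨?_, hy⟩
    rw [← ht.lie_e_f, hy, lie_neg]
end

section
/- Let L be a finite-dimensional real Lie algebra, let h₀ ∈ L satisfy (ad h₀)³ = −ad h₀, and suppose that θ := id + 2(ad h₀)² is a Lie algebra automorphism of L. Let (h, x, y) be an sl₂-triple in L with θ(x) = −y (so that h = ⁅θ(x), x⁆). Then the real span of {h, x, y} is invariant under ad h₀ if and only if ⁅h₀, x⁆ = (1/2)·h or ⁅h₀, x⁆ = −(1/2)·h. Moreover, ad h₀ agrees with ad((1/2)(x − y)) on the span of {h, x, y} precisely when ⁅h₀, x⁆ = (1/2)·h. -/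
private lemma sl2_coeffs_zero {L : Type*} [LieRing L] [LieAlgebra ℝ L] {h x y : L}
    (ht : IsSl2Triple h x y) {a b c : ℝ} (habc : a • h + b • x + c • y = 0) :
    a = 0 ∧ b = 0 ∧ c = 0 := by
  have hx2 : ⁅h, x⁆ = (2:ℝ) • x := ht.lie_h_e_smul ℝ
  have hy2 : ⁅h, y⁆ = -((2:ℝ) • y) := ht.lie_lie_smul_f ℝ
  have hxne : x ≠ 0 := ht.e_ne_zero
  have hyne : y ≠ 0 := ht.f_ne_zero
  have hhne : h ≠ 0 := ht.h_ne_zero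
  have E1 : (2*b) • x - (2*c) • y = 0 := by
    have h1 := congrArg (fun v => ⁅h, v⁆) habc
    simp only [lie_add, lie_smul, lie_self, hx2, hy2, smul_zero, smul_neg, lie_zero] at h1
    linear_combination (norm := module) h1
  have E2 : (4*b) • x + (4*c) • y = 0 := by
    have h2 := congrArg (fun v => ⁅h, v⁆) E1
    simp only [lie_sub, lie_smul, hx2, hy2, smul_neg, lie_zero] at h2
    linear_combination (norm := module) h2
  have hb : (8*b) • x = 0 := by
    linear_combination (norm := module) (2:ℝ) • E1 + E2
  have hb0 : b = 0 := by
    rcases smul_eq_zero.mp hb with h' | h'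
    · linarith
    · exact absurd h' hxne
  subst hb0
  have hcy : (2*c) • y = 0 := by
    linear_combination (norm := module) -E1
  have hc0 : c = 0 := by
    rcases smul_eq_zero.mp hcy with h' | h'
    · linarith
    · exact absurd h' hyne
  subst hc0
  have hah : a • h = 0 := by
    linear_combination (norm := module) habc
  have ha0 : a = 0 := by
    rcases smul_eq_zero.mp hah with h' | h'
    · exact h'
    · exact absurd h' hhne
  exact ⟨ha0, rfl, rfl⟩

set_option maxHeartbeats 2000000 in
/-- Let `L` be a finite-dimensional real Lie algebra, `h₀ ∈ L` with `(ad h₀)³ = −ad h₀`,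
and suppose `θ := id + 2 (ad h₀)²` is a Lie algebra automorphism of `L`.  Let `(h, x, y)`
be an `sl₂`-triple with `θ x = −y`.  Then the real span of `{h, x, y}` is `ad h₀`-invariant
iff `⁅h₀, x⁆ = (1/2) h` or `⁅h₀, x⁆ = −(1/2) h`; moreover `ad h₀` agrees with
`ad ((1/2) (x − y))` on the span of `{h, x, y}` precisely when `⁅h₀, x⁆ = (1/2) h`. -/
theorem adInvariant_span_iff {L : Type*} [LieRing L] [LieAlgebra ℝ L]
    [FiniteDimensional ℝ L]
    (h₀ : L)
    (had : ∀ a : L, ⁅h₀, ⁅h₀, ⁅h₀, a⁆⁆⁆ = -⁅h₀, a⁆)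
    (θ : L → L) (hθdef : ∀ a : L, θ a = a + (2 : ℝ) • ⁅h₀, ⁅h₀, a⁆⁆)
    (hθhom : ∀ a b : L, θ ⁅a, b⁆ = ⁅θ a, θ b⁆)
    (h x y : L) (ht : IsSl2Triple h x y) (hc : θ x = -y) :
    ((∀ v ∈ Submodule.span ℝ ({h, x, y} : Set L),
        ⁅h₀, v⁆ ∈ Submodule.span ℝ ({h, x, y} : Set L)) ↔
      (⁅h₀, x⁆ = (1 / 2 : ℝ) • h ∨ ⁅h₀, x⁆ = -((1 / 2 : ℝ) • h))) ∧
    ((∀ v ∈ Submodule.span ℝ ({h, x, y} : Set L),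
        ⁅h₀, v⁆ = ⁅(1 / 2 : ℝ) • (x - y), v⁆) ↔ ⁅h₀, x⁆ = (1 / 2 : ℝ) • h) := by
  have hx2 : ⁅h, x⁆ = (2:ℝ) • x := ht.lie_h_e_smul ℝ
  have hy2 : ⁅h, y⁆ = -((2:ℝ) • y) := ht.lie_lie_smul_f ℝ
  have hxyh : ⁅x, y⁆ = h := ht.lie_e_f
  have hyx : ⁅y, x⁆ = -h := by
    rw [← hxyh]; exact neg_eq_iff_eq_neg.mp (lie_skew x y)
  have hxh : ⁅x, h⁆ = -((2:ℝ) • x) := by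
    rw [← hx2]; exact neg_eq_iff_eq_neg.mp (lie_skew h x)
  have hyh : ⁅y, h⁆ = (2:ℝ) • y := by
    have h' := neg_eq_iff_eq_neg.mp (lie_skew h y)
    rw [h', hy2, neg_neg]
  -- key identities
  have key1 : ⁅h₀, ⁅h₀, x⁆⁆ = -((1/2:ℝ) • (x + y)) := by
    have h1 := hθdef x
    rw [hc] at h1
    linear_combination (norm := module) (-(1/2:ℝ)) • h1
  have key2 : ⁅h₀, y⁆ = ⁅h₀, x⁆ := by
    have h3 := had x
    rw [key1] at h3
    simp only [lie_neg, lie_smul, lie_add] at h3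
    linear_combination (norm := module) (-2:ℝ) • h3
  have hθy : θ y = -x := by
    rw [hθdef y, key2, key1]
    module
  have hθh : θ h = -h := by
    rw [← hxyh, hθhom, hc, hθy, neg_lie, lie_neg, neg_neg, hyx, hxyh]
  have hw : ⁅h₀, h⁆ = ⁅⁅h₀, x⁆, y⁆ + ⁅x, ⁅h₀, y⁆⁆ := by
    conv_lhs => rw [← hxyh, leibniz_lie]
  have memh : h ∈ Submodule.span ℝ ({h, x, y} : Set L) :=
    Submodule.subset_span (by simp)
  have memx : x ∈ Submodule.span ℝ ({h, x, y} : Set L) :=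
    Submodule.subset_span (by simp)
  have memy : y ∈ Submodule.span ℝ ({h, x, y} : Set L) :=
    Submodule.subset_span (by simp)
  -- brackets with z := (1/2)•(x-y)
  have hzx : ⁅(1/2:ℝ) • (x - y), x⁆ = (1/2:ℝ) • h := by
    simp only [smul_lie, sub_lie, lie_self, hyx]
    module
  have hzy : ⁅(1/2:ℝ) • (x - y), y⁆ = (1/2:ℝ) • h := by
    simp only [smul_lie, sub_lie, lie_self, hxyh]
    module
  have hzh : ⁅(1/2:ℝ) • (x - y), h⁆ = -x - y := by
    simp only [smul_lie, sub_lie, hxh, hyh]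
    module
  constructor
  · constructor
    · -- forward: invariance implies ⁅h₀,x⁆ = ±(1/2)h
      intro hinv
      have hmem := hinv x memx
      rw [Submodule.mem_span_insert] at hmem
      obtain ⟨a, z, hz, hzeq⟩ := hmem
      rw [Submodule.mem_span_insert] at hz
      obtain ⟨b, z', hz', hz'eq⟩ := hz
      rw [Submodule.mem_span_singleton] at hz'
      obtain ⟨c, rfl⟩ := hz'
      subst hz'eq
      have hu : ⁅h₀, x⁆ = a • h + (b • x + c • y) := hzeq
      have hθcomb : θ (a • h + (b • x + c • y)) = a • θ h + (b • θ x + c • θ y) := by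
        simp only [hθdef, lie_add, lie_smul]
        module
      have hθu : θ ⁅h₀, x⁆ = -⁅h₀, x⁆ := by
        rw [hθdef, had x]
        module
      have hbc : b = c := by
        have e := hθu
        rw [hu, hθcomb, hθh, hc, hθy] at e
        have hcomb : (0:ℝ) • h + (b - c) • x + (c - b) • y = 0 := by
          linear_combination (norm := module) e
        obtain ⟨-, hb, -⟩ := sl2_coeffs_zero ht hcomb
        linarith
      subst hbc
      have hwc : ⁅h₀, h⁆ = (2*b) • h + (-(2*a)) • x + (-(2*a)) • y := by
        rw [hw, key2, hu]
        simp only [add_lie, lie_add, smul_lie, lie_smul, lie_self, smul_zero,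
          hy2, hxyh, hxh]
        module
      have heq : (4*a*b) • h + (2*b^2 - 2*a^2 + 1/2) • x + (2*b^2 - 2*a^2 + 1/2) • y = 0 := by
        have e2 : ⁅h₀, ⁅h₀, x⁆⁆ = a • ⁅h₀, h⁆ + (b • ⁅h₀, x⁆ + b • ⁅h₀, y⁆) := by
          conv_lhs => rw [hu]
          simp only [lie_add, lie_smul]
        rw [key1, hwc, key2, hu] at e2
        linear_combination (norm := module) (-1:ℝ) • e2
      obtain ⟨h1, h2, -⟩ := sl2_coeffs_zero ht heq
      rcases mul_eq_zero.mp h1 with h4a | hb0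
      · rcases mul_eq_zero.mp h4a with h40 | ha0
        · norm_num at h40
        · exfalso; nlinarith [sq_nonneg b]
      · subst hb0
        have ha2 : (a - 1/2) * (a + 1/2) = 0 := by nlinarith
        rcases mul_eq_zero.mp ha2 with ha | ha
        · left
          rw [hu]
          have hav : a = 1/2 := by linarith
          rw [hav]; module
        · right
          rw [hu]
          have hav : a = -(1/2) := by linarith
          rw [hav]; module
    · -- backward
      rintro (hu | hu)
      · have hwv : ⁅h₀, h⁆ = -x - y := by
          rw [hw, key2, hu]
          simp only [smul_lie, lie_smul, hy2, hxh]
          module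
        have hsub : Submodule.span ℝ ({h, x, y} : Set L) ≤
            Submodule.comap (LieAlgebra.ad ℝ L h₀)
              (Submodule.span ℝ ({h, x, y} : Set L)) := by
          rw [Submodule.span_le]
          intro g hg
          simp only [Set.mem_insert_iff, Set.mem_singleton_iff] at hg
          rcases hg with rfl | rfl | rfl <;>
            simp only [SetLike.mem_coe, Submodule.mem_comap, LieAlgebra.ad_apply]
          · rw [hwv]
            exact Submodule.sub_mem _ (Submodule.neg_mem _ memx) memy
          · rw [hu]
            exact Submodule.smul_mem _ _ memh
          · rw [key2, hu]
            exact Submodule.smul_mem _ _ memh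
        intro v hv
        have hv2 := hsub hv
        rw [Submodule.mem_comap, LieAlgebra.ad_apply] at hv2
        exact hv2
      · have hwv : ⁅h₀, h⁆ = x + y := by
          rw [hw, key2, hu]
          simp only [neg_lie, lie_neg, smul_lie, lie_smul, hy2, hxh]
          module
        have hsub : Submodule.span ℝ ({h, x, y} : Set L) ≤
            Submodule.comap (LieAlgebra.ad ℝ L h₀)
              (Submodule.span ℝ ({h, x, y} : Set L)) := by
          rw [Submodule.span_le]
          intro g hg
          simp only [Set.mem_insert_iff, Set.mem_singleton_iff] at hg
          rcases hg with rfl | rfl | rfl <;>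
            simp only [SetLike.mem_coe, Submodule.mem_comap, LieAlgebra.ad_apply]
          · rw [hwv]
            exact Submodule.add_mem _ memx memy
          · rw [hu]
            exact Submodule.neg_mem _ (Submodule.smul_mem _ _ memh)
          · rw [key2, hu]
            exact Submodule.neg_mem _ (Submodule.smul_mem _ _ memh)
        intro v hv
        have hv2 := hsub hv
        rw [Submodule.mem_comap, LieAlgebra.ad_apply] at hv2
        exact hv2
  · constructor
    · intro hag
      have h' := hag x memx
      rw [hzx] at h'
      exact h'
    · intro hu v hv
      have hwv : ⁅h₀, h⁆ = -x - y := by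
        rw [hw, key2, hu]
        simp only [smul_lie, lie_smul, hy2, hxh]
        module
      have hker : Submodule.span ℝ ({h, x, y} : Set L) ≤
          LinearMap.ker (LieAlgebra.ad ℝ L (h₀ - (1/2:ℝ) • (x - y))) := by
        rw [Submodule.span_le]
        intro g hg
        simp only [Set.mem_insert_iff, Set.mem_singleton_iff] at hg
        rcases hg with rfl | rfl | rfl <;>
          simp only [SetLike.mem_coe, LinearMap.mem_ker, LieAlgebra.ad_apply, sub_lie,
            sub_eq_zero]
        · rw [hwv, hzh]
        · rw [hu, hzx]
        · rw [key2, hu, hzy]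
      have h0 := hker hv
      rw [LinearMap.mem_ker, LieAlgebra.ad_apply, sub_lie, sub_eq_zero] at h0
      exact h0
end

section
/- Let L be a finite-dimensional real Lie algebra, let (h, x, y) be an sl₂-triple in L, and let h₀ ∈ L satisfy ⁅h₀, x⁆ = (1/2)·h. Then (ad x)(h₀) = −(1/2)·h, (ad x)²(h₀) = x, (ad x)³(h₀) = 0, and hence exp(t·ad x)(h₀) = h₀ − (t/2)·h + (t²/2)·x for all t ∈ ℝ; consequently x = lim_{t→∞} (2/t²)·exp(t·ad x)(h₀). In particular, if Ω ⊆ L is a closed subset with s·Ω ⊆ Ω for all s ≥ 0 and exp(t·ad x)(Ω) ⊆ Ω for all t ∈ ℝ, and h₀ ∈ Ω, then x ∈ Ω. -/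
open scoped Topology Pointwise

/-- Let `L` be a finite-dimensional real Lie algebra (a finite-dimensional real vector
space with a Lie bracket `B`, i.e. an alternating bilinear map satisfying the Jacobi
identity), `(h, x, y)` an `sl₂`-triple in `L`, and `h₀ ∈ L` with `⁅h₀, x⁆ = (1/2) h`.
Then `(ad x) h₀ = −(1/2) h`, `(ad x)² h₀ = x`, `(ad x)³ h₀ = 0`, hence
`exp (t ad x) h₀ = h₀ − (t/2) h + (t²/2) x` for all `t`, and consequently
`x = lim_{t → ∞} (2/t²) exp (t ad x) h₀`.  In particular, if `Ω ⊆ L` is closed,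
stable under multiplication by nonnegative scalars and invariant under every
`exp (t ad x)`, and `h₀ ∈ Ω`, then `x ∈ Ω`. -/
theorem exp_ad_formula_and_cone_mem {L : Type*}
    [NormedAddCommGroup L] [NormedSpace ℝ L] [FiniteDimensional ℝ L]
    (B : L →ₗ[ℝ] L →ₗ[ℝ] L)
    (hBalt : ∀ a : L, B a a = 0)
    (hBjacobi : ∀ a b c : L, B a (B b c) = B (B a b) c + B b (B a c))
    (h x y h₀ : L)
    (hh : h ≠ 0) (hhx : B h x = (2 : ℝ) • x) (hhy : B h y = -((2 : ℝ) • y))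
    (hxy : B x y = h)
    (hh₀x : B h₀ x = (1 / 2 : ℝ) • h) :
    B x h₀ = -((1 / 2 : ℝ) • h) ∧
    B x (B x h₀) = x ∧
    B x (B x (B x h₀)) = 0 ∧
    (∀ t : ℝ, NormedSpace.exp (LinearMap.toContinuousLinearMap (t • B x)) h₀ =
        h₀ - (t / 2) • h + (t ^ 2 / 2) • x) ∧
    Filter.Tendsto
      (fun t : ℝ => (2 / t ^ 2) •
        NormedSpace.exp (LinearMap.toContinuousLinearMap (t • B x)) h₀)
      Filter.atTop (𝓝 x) ∧
    (∀ Ω : Set L, IsClosed Ω → (∀ s : ℝ, 0 ≤ s → s • Ω ⊆ Ω) →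
      (∀ t : ℝ, ⇑(NormedSpace.exp (LinearMap.toContinuousLinearMap (t • B x))) '' Ω ⊆ Ω) →
      h₀ ∈ Ω → x ∈ Ω) := by

  have hanti : ∀ a b : L, B a b = - B b a := by
    intro a b
    have h0 := hBalt (a + b)
    simp only [map_add, LinearMap.add_apply, hBalt, zero_add, add_zero] at h0
    exact eq_neg_of_add_eq_zero_right h0
  have h1 : B x h₀ = -((1 / 2 : ℝ) • h) := by rw [hanti, hh₀x]
  have hxh : B x h = -((2 : ℝ) • x) := by rw [hanti, hhx]
  have h2 : B x (B x h₀) = x := by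
    rw [h1, map_neg, map_smul, hxh]
    rw [smul_neg, neg_neg, smul_smul]
    norm_num
  have h3 : B x (B x (B x h₀)) = 0 := by rw [h2, hBalt]
  set A : ℝ → (L →L[ℝ] L) := fun t => LinearMap.toContinuousLinearMap (t • B x) with hAdef
  have hAapp : ∀ t v, A t v = t • B x v := by intro t v; simp [hAdef]
  have hA1 : ∀ t, A t h₀ = -((t / 2) • h) := by
    intro t; rw [hAapp, h1, smul_neg, smul_smul]
    congr 2; ring
  have hA2 : ∀ t, (A t ^ 2) h₀ = (t ^ 2) • x := by
    intro t
    have e : (A t ^ 2) h₀ = A t (A t h₀) := by rw [pow_two]; rfl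
    rw [e, hA1, hAapp, map_neg, map_smul, hxh]
    module
  have hA3 : ∀ t, (A t ^ 3) h₀ = 0 := by
    intro t
    have e : (A t ^ 3) h₀ = A t ((A t ^ 2) h₀) := by
      rw [pow_succ']; rfl
    rw [e, hA2, hAapp, map_smul, hBalt, smul_zero, smul_zero]
  have hAn : ∀ t, ∀ n, 3 ≤ n → (A t ^ n) h₀ = 0 := by
    intro t n hn
    obtain ⟨k, rfl⟩ := Nat.exists_eq_add_of_le hn
    rw [add_comm, pow_add]
    show (A t ^ k) ((A t ^ 3) h₀) = 0
    rw [hA3, map_zero]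
  have hexp : ∀ t : ℝ, NormedSpace.exp (LinearMap.toContinuousLinearMap (t • B x)) h₀ =
      h₀ - (t / 2) • h + (t ^ 2 / 2) • x := by
    intro t
    have hsum := NormedSpace.expSeries_summable' (𝕂 := ℝ) (A t)
    have e1 : NormedSpace.exp (A t) h₀ =
        ∑' n : ℕ, ((n.factorial : ℝ)⁻¹ • (A t ^ n)) h₀ := by
      rw [NormedSpace.exp_eq_tsum ℝ]
      exact (ContinuousLinearMap.apply ℝ L h₀).map_tsum hsum
    rw [show LinearMap.toContinuousLinearMap (t • B x) = A t from rfl, e1]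
    rw [tsum_eq_sum (s := Finset.range 3) (by
      intro n hn
      simp only [Finset.mem_range, not_lt] at hn
      simp [hAn t n hn])]
    simp only [ContinuousLinearMap.smul_apply]
    rw [Finset.sum_range_succ, Finset.sum_range_succ, Finset.sum_range_succ,
      Finset.sum_range_zero]
    rw [pow_zero, pow_one, hA1, hA2]
    simp only [Nat.factorial, ContinuousLinearMap.one_apply]
    push_cast
    rw [smul_smul]
    module
  have htend : Filter.Tendsto
      (fun t : ℝ => (2 / t ^ 2) •
        NormedSpace.exp (LinearMap.toContinuousLinearMap (t • B x)) h₀)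
      Filter.atTop (𝓝 x) := by
    have hsq : Filter.Tendsto (fun t : ℝ => t ^ 2) Filter.atTop Filter.atTop :=
      Filter.tendsto_pow_atTop two_ne_zero
    have hc : Filter.Tendsto (fun t : ℝ => 2 / t ^ 2) Filter.atTop (𝓝 0) :=
      Filter.Tendsto.div_atTop tendsto_const_nhds hsq
    have hi : Filter.Tendsto (fun t : ℝ => 1 / t) Filter.atTop (𝓝 0) := by
      simpa [one_div] using tendsto_inv_atTop_zero
    have hg : Filter.Tendsto (fun t : ℝ => (2 / t ^ 2) • h₀ - (1 / t) • h + x)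
        Filter.atTop (𝓝 x) := by
      have := ((hc.smul_const h₀).sub (hi.smul_const h)).add
        (tendsto_const_nhds (x := x) (f := Filter.atTop))
      simpa using this
    refine hg.congr' ?_
    filter_upwards [Filter.eventually_gt_atTop (0 : ℝ)] with t ht
    have ht2 : t ^ 2 ≠ 0 := by positivity
    have e1 : 2 / t ^ 2 * (t / 2) = 1 / t := by field_simp
    have e2 : 2 / t ^ 2 * (t ^ 2 / 2) = 1 := by field_simp
    rw [hexp t, smul_add, smul_sub, smul_smul, smul_smul, e1, e2, one_smul]
  refine ⟨h1, h2, h3, hexp, htend, ?_⟩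
  intro Ω hclosed hcone hinv hmem
  refine hclosed.mem_of_tendsto htend (Filter.Eventually.of_forall fun t => ?_)
  have h4 : NormedSpace.exp (LinearMap.toContinuousLinearMap (t • B x)) h₀ ∈ Ω :=
    hinv t ⟨h₀, hmem, rfl⟩
  exact hcone (2 / t ^ 2) (by positivity) ⟨_, h4, rfl⟩
end

section
/- Let L be a finite-dimensional real Lie algebra and Ω ⊆ L a closed convex cone. Let F be a face of Ω, let ξ lie in the relative interior of F, and let η ∈ L be such that ⁅η, ξ⁆ ∈ ℝ·ξ and exp(t·ad η)(Ω) = Ω for all t ∈ ℝ. Then ⁅η, f⁆ lies in the real linear span of F for every f ∈ F. -/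
open scoped Pointwise

open NormedSpace in
private lemma aux_exp_eigen {L : Type*}
    [NormedAddCommGroup L] [NormedSpace ℝ L] [FiniteDimensional ℝ L]
    (A : L →L[ℝ] L) (ξ : L) (c : ℝ) (hA : A ξ = c • ξ) (t : ℝ) :
    (exp (t • A)) ξ = Real.exp (t * c) • ξ := by
  have hpow : ∀ n : ℕ, ((t • A) ^ n) ξ = (t * c) ^ n • ξ := by
    intro n
    induction n with
    | zero => simp
    | succ n ih =>
      rw [pow_succ', pow_succ']
      simp only [ContinuousLinearMap.mul_apply, ih]
      rw [map_smul, ContinuousLinearMap.smul_apply, hA, smul_smul, smul_smul]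
      ring_nf
  have hsum : Summable fun n : ℕ => ((n.factorial : ℝ)⁻¹) • (t • A) ^ n :=
    expSeries_summable' (𝕂 := ℝ) (t • A)
  have happ : (exp (t • A)) ξ
      = ∑' n : ℕ, ((n.factorial : ℝ)⁻¹) • ((t • A) ^ n) ξ := by
    rw [exp_eq_tsum ℝ]
    have := (ContinuousLinearMap.apply ℝ L ξ).map_tsum hsum
    simpa using this
  rw [happ]
  have : ∀ n : ℕ, ((n.factorial : ℝ)⁻¹) • ((t • A) ^ n) ξ
      = (((n.factorial : ℝ)⁻¹) * (t * c) ^ n) • ξ := by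
    intro n; rw [hpow n, smul_smul]
  rw [tsum_congr this]
  have hsum2 : Summable fun n : ℕ => ((n.factorial : ℝ)⁻¹) * (t * c) ^ n := by
    simpa [smul_eq_mul] using expSeries_summable' (𝕂 := ℝ) (t * c)
  rw [hsum2.tsum_smul_const]
  congr 1
  rw [Real.exp_eq_exp_ℝ, exp_eq_tsum ℝ]
  simp [smul_eq_mul]

private lemma aux_extension {L : Type*}
    [NormedAddCommGroup L] [NormedSpace ℝ L] {F : Set L} {ξ f : L}
    (hξ : ξ ∈ intrinsicInterior ℝ F) (hf : f ∈ F) :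
    ∃ y ∈ F, ξ ∈ openSegment ℝ f y := by
  obtain ⟨z, hz, hzξ⟩ := hξ
  have hξF : ξ ∈ F := by
    have := interior_subset hz
    simpa [hzξ] using this
  have hξspan : ξ ∈ affineSpan ℝ F := by rw [← hzξ]; exact z.2
  have hfspan : f ∈ affineSpan ℝ F := subset_affineSpan ℝ F hf
  -- the curve δ ↦ ξ + δ • (ξ - f), valued in the affine span
  have hmem : ∀ δ : ℝ, δ • (ξ - f) + ξ ∈ affineSpan ℝ F := by
    intro δ
    have := (affineSpan ℝ F).smul_vsub_vadd_mem δ hξspan hfspan hξspan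
    simpa [vsub_eq_sub, vadd_eq_add] using this
  set γ : ℝ → affineSpan ℝ F := fun δ => ⟨δ • (ξ - f) + ξ, hmem δ⟩ with hγ
  have hγcont : Continuous γ := by
    apply continuous_induced_rng.2
    exact (continuous_id.smul continuous_const).add continuous_const
  have hγ0 : γ 0 = z := by
    apply Subtype.ext
    simp [hγ, hzξ]
  have hnhds : γ ⁻¹' (interior ((↑) ⁻¹' F : Set (affineSpan ℝ F))) ∈ nhds (0 : ℝ) := by
    apply hγcont.continuousAt.preimage_mem_nhds
    exact isOpen_interior.mem_nhds (by rw [hγ0]; exact hz)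
  obtain ⟨ε, hε, hball⟩ := Metric.mem_nhds_iff.1 hnhds
  set δ : ℝ := ε / 2 with hδ
  have hδpos : (0 : ℝ) < δ := by positivity
  have hδball : δ ∈ Metric.ball (0 : ℝ) ε := by
    simp only [Metric.mem_ball, dist_zero_right, Real.norm_eq_abs, hδ]
    rw [abs_of_pos (by positivity)]; linarith
  have hyF : δ • (ξ - f) + ξ ∈ F := by
    have := interior_subset (hball hδball)
    simpa [hγ] using this
  refine ⟨δ • (ξ - f) + ξ, hyF, ?_⟩
  refine ⟨δ / (1 + δ), 1 / (1 + δ), by positivity, by positivity, ?_, ?_⟩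
  · field_simp
    ring
  · have h1δ : (1 : ℝ) + δ ≠ 0 := by positivity
    match_scalars <;> (field_simp; try ring)
  
private lemma aux_face_subset {L : Type*}
    [NormedAddCommGroup L] [NormedSpace ℝ L] {Ω F G : Set L}
    (hF : F ⊆ Ω) (hG : IsExtreme ℝ Ω G)
    {ξ : L} (hξ : ξ ∈ intrinsicInterior ℝ F) (hξG : ξ ∈ G) : F ⊆ G := by
  intro f hf
  obtain ⟨y, hy, hseg⟩ := aux_extension hξ hf
  exact hG.2 (hF hf) (hF hy) hξG hseg

private lemma aux_extreme_image {L : Type*}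
    [NormedAddCommGroup L] [NormedSpace ℝ L] (φ : L →ₗ[ℝ] L)
    (hφ : Function.Injective φ) {s u : Set L}
    (h : IsExtreme ℝ s u) : IsExtreme ℝ (φ '' s) (φ '' u) := by
  constructor
  · exact Set.image_mono h.1
  · rintro _ ⟨x, hx, rfl⟩ _ ⟨y, hy, rfl⟩ _ ⟨z, hz, rfl⟩ hseg
    have himg : ⇑φ '' openSegment ℝ x y = openSegment ℝ (φ x) (φ y) := by
      have := image_openSegment ℝ φ.toAffineMap x y
      simpa using this
    have : φ z ∈ ⇑φ '' openSegment ℝ x y := by rw [himg]; exact hseg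
    obtain ⟨w, hw, hwz⟩ := this
    have : w = z := hφ hwz
    subst this
    have hxu := h.2 hx hy hz hw
    have hyu := h.right_mem_of_mem_openSegment hx hy hz hw
    exact Set.mem_image_of_mem _ hxu

/-- Let `L` be a finite-dimensional real Lie algebra (a finite-dimensional real vector
space with a Lie bracket `B`) and `Ω ⊆ L` a closed convex cone.  Let `F` be a face of
`Ω`, let `ξ` lie in the relative interior of `F`, and let `η ∈ L` be such that
`⁅η, ξ⁆ ∈ ℝ·ξ` and `exp (t ad η) Ω = Ω` for all `t ∈ ℝ`.  Then `⁅η, f⁆` lies in the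
real linear span of `F` for every `f ∈ F`. -/
theorem lie_mem_span_of_face {L : Type*}
    [NormedAddCommGroup L] [NormedSpace ℝ L] [FiniteDimensional ℝ L]
    (B : L →ₗ[ℝ] L →ₗ[ℝ] L)
    (hBalt : ∀ a : L, B a a = 0)
    (hBjacobi : ∀ a b c : L, B a (B b c) = B (B a b) c + B b (B a c))
    (Ω : Set L) (hΩclosed : IsClosed Ω) (hΩconvex : Convex ℝ Ω)
    (hΩcone : ∀ c : ℝ, 0 < c → c • Ω ⊆ Ω)
    (F : Set L) (hFconvex : Convex ℝ F) (hFface : IsExtreme ℝ Ω F)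
    (ξ : L) (hξ : ξ ∈ intrinsicInterior ℝ F)
    (η : L) (hηξ : ∃ c : ℝ, B η ξ = c • ξ)
    (hinv : ∀ t : ℝ,
      ⇑(NormedSpace.exp (LinearMap.toContinuousLinearMap (t • B η))) '' Ω = Ω) :
    ∀ f ∈ F, B η f ∈ Submodule.span ℝ F := by
  obtain ⟨c, hc⟩ := hηξ
  set A : L →L[ℝ] L := LinearMap.toContinuousLinearMap (B η) with hA
  have hAξ : A ξ = c • ξ := hc
  set E : ℝ → (L →L[ℝ] L) := fun t => NormedSpace.exp (t • A) with hE
  -- E t ∘ E (-t) = id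
  have hEinv : ∀ t : ℝ, ∀ x : L, E t (E (-t) x) = x := by
    intro t x
    have hcomm : Commute (t • A) ((-t) • A) := by
      show _ = _
      ext y
      simp [ContinuousLinearMap.mul_apply, map_smul, smul_smul, mul_comm]
    let +nondep : NormedAlgebra ℚ (L →L[ℝ] L) := .restrictScalars ℚ ℝ (L →L[ℝ] L)
    have := NormedSpace.exp_add_of_commute hcomm
    have h0 : t • A + (-t) • A = 0 := by
      rw [← add_smul]; simp
    rw [h0, NormedSpace.exp_zero (𝔸 := L →L[ℝ] L)] at this
    calc E t (E (-t) x) = ((E t) * (E (-t))) x := rfl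
      _ = x := by rw [hE, ← this]; simp
  have hEinj : ∀ t : ℝ, Function.Injective (E t) := by
    intro t
    intro x y hxy
    have := congrArg (E (-t)) hxy
    have h1 := hEinv (-t) x
    have h2 := hEinv (-t) y
    rw [neg_neg] at h1 h2
    rwa [h1, h2] at this
  -- invariance of Ω
  have hEΩ : ∀ t : ℝ, ⇑(E t) '' Ω = Ω := by
    intro t
    have := hinv t
    rwa [map_smul LinearMap.toContinuousLinearMap] at this
  -- eigenvalue property
  have hEξ : ∀ t : ℝ, E t ξ = Real.exp (t * c) • ξ := fun t => aux_exp_eigen A ξ c hAξ t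
  have hξF : ξ ∈ F := intrinsicInterior_subset hξ
  -- scaled cone invariance
  have hΩsmul : ∀ r : ℝ, 0 < r → r • Ω = Ω := by
    intro r hr
    refine Set.Subset.antisymm (hΩcone r hr) ?_
    intro x hx
    have : r⁻¹ • x ∈ Ω := hΩcone r⁻¹ (by positivity) ⟨x, hx, rfl⟩
    exact ⟨r⁻¹ • x, this, by
      show r • r⁻¹ • x = x
      rw [smul_smul, mul_inv_cancel₀ hr.ne', one_smul]⟩
  -- main claim: F ⊆ (exp (t*c))⁻¹ • (E t '' F) for all t
  have hmain : ∀ t : ℝ, F ⊆ (Real.exp (t * c))⁻¹ • (⇑(E t) '' F) := by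
    intro t
    set r : ℝ := Real.exp (t * c) with hr
    have hrpos : 0 < r := Real.exp_pos _
    have h1 : IsExtreme ℝ Ω (⇑(E t) '' F) := by
      have := aux_extreme_image (E t : L →ₗ[ℝ] L) (hEinj t) hFface
      simpa [hEΩ t] using this
    have h2 : IsExtreme ℝ Ω (r⁻¹ • (⇑(E t) '' F)) := by
      have hinj : Function.Injective (r⁻¹ • (LinearMap.id : L →ₗ[ℝ] L)) := by
        intro x y hxy
        simp only [LinearMap.smul_apply, LinearMap.id_apply] at hxy
        have := congrArg (fun z => r • z) hxy
        simpa [smul_smul, mul_inv_cancel₀ hrpos.ne'] using this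
      have := aux_extreme_image _ hinj h1
      have himg : ∀ s : Set L, ⇑(r⁻¹ • (LinearMap.id : L →ₗ[ℝ] L)) '' s = r⁻¹ • s := by
        intro s
        ext x
        simp [Set.mem_smul_set]
      rw [himg, himg] at this
      rwa [hΩsmul r⁻¹ (by positivity)] at this
    have hξG : ξ ∈ r⁻¹ • (⇑(E t) '' F) := by
      refine ⟨E t ξ, Set.mem_image_of_mem _ hξF, ?_⟩
      show r⁻¹ • E t ξ = ξ
      rw [hEξ t, ← hr, smul_smul, inv_mul_cancel₀ hrpos.ne', one_smul]
    exact aux_face_subset hFface.1 h2 hξ hξG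
  -- hence E t f ∈ span F for all t, f ∈ F
  have hES : ∀ t : ℝ, ∀ f ∈ F, E t f ∈ Submodule.span ℝ F := by
    intro t f hf
    obtain ⟨_, ⟨g, hg, rfl⟩, heq⟩ := hmain (-t) hf
    -- f = (exp (-t*c))⁻¹ • E (-t) g
    have : E t f = (Real.exp (-t * c))⁻¹ • g := by
      rw [← heq, map_smul, hEinv t g]
    rw [this]
    exact Submodule.smul_mem _ _ (Submodule.subset_span hg)
  -- differentiate at t = 0
  intro f hf
  have hderiv : HasDerivAt (fun u : ℝ => E u f) (A f) 0 := by
    have h := hasDerivAt_exp_smul_const (𝕂 := ℝ) A (0 : ℝ)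
    have h2 := (ContinuousLinearMap.apply ℝ L f).hasFDerivAt.comp_hasDerivAt 0 h
    simpa [hE, Function.comp_def] using h2
  have hslope := hasDerivAt_iff_tendsto_slope.1 hderiv
  have hclosed : IsClosed (Submodule.span ℝ F : Set L) :=
    (Submodule.span ℝ F).closed_of_finiteDimensional
  have hmem : ∀ u : ℝ, slope (fun u : ℝ => E u f) 0 u ∈ Submodule.span ℝ F := by
    intro u
    rw [slope_def_module]
    exact Submodule.smul_mem _ _
      (Submodule.sub_mem _ (hES u f hf) (hES 0 f hf))
  have : A f ∈ Submodule.span ℝ F :=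
    hclosed.mem_of_tendsto hslope (Filter.Eventually.of_forall fun u => hmem u)
  exact this
end

section
/- Let L be a finite-dimensional real Lie algebra and Ω ⊆ L a closed convex cone such that exp(ad ζ)(Ω) = Ω for every ζ ∈ L (invariance under all inner automorphisms). Then for every face F of Ω, the real linear span of F is a Lie subalgebra of L. -/
open scoped Pointwise

/-- A face (extreme subset) of a convex cone containing `0` is closed under
multiplication by positive scalars. -/
lemma face_smul_mem {L : Type*} [NormedAddCommGroup L] [NormedSpace ℝ L]
    {Ω A : Set L} (hΩcone : ∀ c : ℝ, 0 < c → c • Ω ⊆ Ω) (h0 : (0 : L) ∈ Ω)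
    (hA : IsExtreme ℝ Ω A) {u : L} (hu : u ∈ A) {c : ℝ} (hc : 0 < c) :
    c • u ∈ A := by
  have huΩ : u ∈ Ω := hA.1 hu
  have hmem : ∀ d : ℝ, 0 < d → d • u ∈ Ω := fun d hd =>
    hΩcone d hd ⟨u, huΩ, rfl⟩
  by_cases hc2 : c < 2
  · have h2c : (0 : ℝ) < 2 - c := by linarith
    have hseg : u ∈ openSegment ℝ (c • u) ((2 - c) • u) :=
      ⟨1/2, 1/2, by norm_num, by norm_num, by norm_num, by module⟩
    exact hA.2 (hmem c hc) (hmem _ h2c) hu hseg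
  · push_neg at hc2
    have hc0 : c ≠ 0 := by positivity
    have hseg : u ∈ openSegment ℝ (c • u) (0 : L) := by
      refine ⟨1/c, 1 - 1/c, by positivity, ?_, by ring, ?_⟩
      · have : 1/c ≤ 1/2 := by
          apply one_div_le_one_div_of_le <;> linarith
        linarith
      · rw [smul_smul, smul_zero, add_zero, one_div, inv_mul_cancel₀ hc0, one_smul]
    exact hA.2 (hmem c hc) h0 hu hseg

/-- If the sum of two elements of a convex cone lies in a face, each summand does. -/
lemma face_add_mem {L : Type*} [NormedAddCommGroup L] [NormedSpace ℝ L]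
    {Ω A : Set L} (hΩcone : ∀ c : ℝ, 0 < c → c • Ω ⊆ Ω) (h0 : (0 : L) ∈ Ω)
    (hA : IsExtreme ℝ Ω A) {a b : L} (ha : a ∈ Ω) (hb : b ∈ Ω)
    (hab : a + b ∈ A) : a ∈ A := by
  have h2a : (2 : ℝ) • a ∈ Ω := hΩcone 2 (by norm_num) ⟨a, ha, rfl⟩
  have h2b : (2 : ℝ) • b ∈ Ω := hΩcone 2 (by norm_num) ⟨b, hb, rfl⟩
  have hseg : a + b ∈ openSegment ℝ ((2 : ℝ) • a) ((2 : ℝ) • b) :=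
    ⟨1/2, 1/2, by norm_num, by norm_num, by norm_num, by module⟩
  have h2aA : (2 : ℝ) • a ∈ A := hA.2 h2a h2b hab hseg
  have := face_smul_mem hΩcone h0 hA h2aA (c := 1/2) (by norm_num)
  rwa [smul_smul, show (1/2 : ℝ) * 2 = 1 by norm_num, one_smul] at this

/-- An injective linear map preserving a convex set maps extreme subsets to extreme
subsets. -/
lemma isExtreme_image {L : Type*} [NormedAddCommGroup L] [NormedSpace ℝ L]
    {Ω A : Set L} (φ : L →L[ℝ] L) (hinj : Function.Injective φ)
    (hΩ : φ '' Ω = Ω) (hA : IsExtreme ℝ Ω A) : IsExtreme ℝ Ω (φ '' A) := by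
  constructor
  · rw [← hΩ]; exact Set.image_mono hA.1
  · rintro x1 hx1 x2 hx2 p ⟨q, hq, rfl⟩ hseg
    rw [← hΩ] at hx1 hx2
    obtain ⟨u1, hu1, rfl⟩ := hx1
    obtain ⟨u2, hu2, rfl⟩ := hx2
    obtain ⟨s, t, hs, ht, hst, heq⟩ := hseg
    have : φ (s • u1 + t • u2) = φ q := by
      simpa [map_add, map_smul] using heq
    have hq' : q ∈ openSegment ℝ u1 u2 := ⟨s, t, hs, ht, hst, hinj this⟩
    have := hA.2 hu1 hu2 hq hq'
    exact ⟨u1, this, rfl⟩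

/-- If `M z = 0` then `exp M` fixes `z`. -/
lemma exp_apply_eq_self {L : Type*} [NormedAddCommGroup L] [NormedSpace ℝ L]
    [CompleteSpace L] {M : L →L[ℝ] L} {z : L} (h : M z = 0) :
    NormedSpace.exp M z = z := by
  have hs : Summable (fun n : ℕ => ((Nat.factorial n : ℝ))⁻¹ • M ^ n) :=
    NormedSpace.expSeries_summable' M
  have h1 : NormedSpace.exp M z = (∑' n : ℕ, ((Nat.factorial n : ℝ))⁻¹ • M ^ n) z := by
    rw [NormedSpace.exp_eq_tsum ℝ]
  have h2 : (∑' n : ℕ, ((Nat.factorial n : ℝ))⁻¹ • M ^ n) z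
      = (ContinuousLinearMap.apply ℝ L z) (∑' n : ℕ, ((Nat.factorial n : ℝ))⁻¹ • M ^ n) := rfl
  rw [h1, h2, ContinuousLinearMap.map_tsum _ hs]
  have h3 : ∀ n : ℕ, (ContinuousLinearMap.apply ℝ L z)
      (((Nat.factorial n : ℝ))⁻¹ • M ^ n) = ((Nat.factorial n : ℝ))⁻¹ • ((M ^ n) z) := by
    intro n; simp
  simp_rw [h3]
  rw [tsum_eq_single 0 ?_]
  · simp
  · intro n hn
    obtain ⟨k, rfl⟩ := Nat.exists_eq_succ_of_ne_zero hn
    rw [pow_succ, ContinuousLinearMap.mul_apply, h, map_zero, smul_zero]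

set_option maxHeartbeats 1000000 in
set_option synthInstance.maxHeartbeats 400000 in
/-- Let `L` be a finite-dimensional real Lie algebra (a finite-dimensional real vector
space with a Lie bracket `B`) and `Ω ⊆ L` a closed convex cone invariant under all
inner automorphisms `exp (ad ζ)`, `ζ ∈ L`.  Then for every face `F` of `Ω`, the real
linear span of `F` is a Lie subalgebra of `L`. -/
theorem span_face_isLieSubalgebra {L : Type*}
    [NormedAddCommGroup L] [NormedSpace ℝ L] [FiniteDimensional ℝ L]
    (B : L →ₗ[ℝ] L →ₗ[ℝ] L)
    (hBalt : ∀ a : L, B a a = 0)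
    (hBjacobi : ∀ a b c : L, B a (B b c) = B (B a b) c + B b (B a c))
    (Ω : Set L) (hΩclosed : IsClosed Ω) (hΩconvex : Convex ℝ Ω)
    (hΩcone : ∀ c : ℝ, 0 < c → c • Ω ⊆ Ω)
    (hinv : ∀ ζ : L,
      ⇑(NormedSpace.exp (LinearMap.toContinuousLinearMap (B ζ))) '' Ω = Ω) :
    ∀ F : Set L, Convex ℝ F → IsExtreme ℝ Ω F →
      ∀ a ∈ Submodule.span ℝ F, ∀ b ∈ Submodule.span ℝ F,
        B a b ∈ Submodule.span ℝ F := by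
  intro F hFconv hFext a ha b hb
  set V : Submodule ℝ L := Submodule.span ℝ F with hV
  -- the key special case: `x, y ∈ F`.
  have key : ∀ x ∈ F, ∀ y ∈ F, B x y ∈ V := by
    intro x hx y hy
    have hxΩ : x ∈ Ω := hFext.1 hx
    have hyΩ : y ∈ Ω := hFext.1 hy
    -- The cone contains 0.
    have h0Ω : (0 : L) ∈ Ω := by
      have htend : Filter.Tendsto (fun n : ℕ => (1 / (n + 1) : ℝ) • x)
          Filter.atTop (nhds 0) := by
        have := tendsto_one_div_add_atTop_nhds_zero_nat (𝕜 := ℝ)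
        simpa using this.smul_const x
      refine hΩclosed.mem_of_tendsto htend (Filter.Eventually.of_forall fun n => ?_)
      exact hΩcone _ (by positivity) ⟨x, hxΩ, rfl⟩
    -- z = x + y lies in F
    set z : L := x + y with hz
    have hzF : z ∈ F := by
      have hmid : (1/2 : ℝ) • x + (1/2 : ℝ) • y ∈ F :=
        hFconv hx hy (by norm_num) (by norm_num) (by norm_num)
      have := face_smul_mem hΩcone h0Ω hFext hmid (c := 2) (by norm_num)
      have he : (2 : ℝ) • ((1/2 : ℝ) • x + (1/2 : ℝ) • y) = z := by module
      rwa [he] at this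
    -- the minimal face of Ω containing z
    set G : Set L := ⋂₀ {A : Set L | IsExtreme ℝ Ω A ∧ z ∈ A} with hG
    have hGF : G ⊆ F := Set.sInter_subset_of_mem ⟨hFext, hzF⟩
    have hyG : y ∈ G := by
      intro A hA
      have hzA : x + y ∈ A := hA.2
      exact face_add_mem hΩcone h0Ω hA.1 hyΩ hxΩ (by rwa [add_comm])
    -- the one-parameter group exp (t • ad z)
    set M : L →L[ℝ] L := LinearMap.toContinuousLinearMap (B z) with hM
    have hMz : M z = 0 := by
      simp only [hM, LinearMap.coe_toContinuousLinearMap']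
      exact hBalt z
    have hφΩ : ∀ t : ℝ, ⇑(NormedSpace.exp (t • M)) '' Ω = Ω := by
      intro t
      have h1 : LinearMap.toContinuousLinearMap (B (t • z)) = t • M := by
        rw [map_smul, map_smul]
      have := hinv (t • z)
      rwa [h1] at this
    have hmul : ∀ s t : ℝ, NormedSpace.exp ((s + t) • M)
        = NormedSpace.exp (s • M) * NormedSpace.exp (t • M) := by
      intro s t
      rw [add_smul]
      exact NormedSpace.exp_add_of_commute_of_mem_ball (𝕂 := ℝ) (((Commute.refl M).smul_left s).smul_right t)
        ((NormedSpace.expSeries_radius_eq_top ℝ (L →L[ℝ] L)).symm ▸ edist_lt_top _ _)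
        ((NormedSpace.expSeries_radius_eq_top ℝ (L →L[ℝ] L)).symm ▸ edist_lt_top _ _)
    have hφinj : ∀ t : ℝ, Function.Injective ⇑(NormedSpace.exp (t • M)) := by
      intro t
      apply Function.LeftInverse.injective (g := ⇑(NormedSpace.exp ((-t) • M)))
      intro w
      rw [← ContinuousLinearMap.mul_apply, ← hmul, neg_add_cancel, zero_smul,
        NormedSpace.exp_zero, ContinuousLinearMap.one_apply]
    -- exp (t • M) preserves the minimal face G
    have hφG : ∀ t : ℝ, ∀ w ∈ G, NormedSpace.exp (t • M) w ∈ G := by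
      intro t w hw A hA
      have hA' : IsExtreme ℝ Ω (⇑(NormedSpace.exp ((-t) • M)) '' A) :=
        isExtreme_image _ (hφinj (-t)) (hφΩ (-t)) hA.1
      have hzA' : z ∈ ⇑(NormedSpace.exp ((-t) • M)) '' A :=
        ⟨z, hA.2, exp_apply_eq_self (by rw [ContinuousLinearMap.smul_apply, hMz, smul_zero])⟩
      have hwA' : w ∈ ⇑(NormedSpace.exp ((-t) • M)) '' A := hw _ ⟨hA', hzA'⟩
      obtain ⟨q, hq, rfl⟩ := hwA'
      show NormedSpace.exp (t • M) (NormedSpace.exp ((-t) • M) q) ∈ A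
      rw [← ContinuousLinearMap.mul_apply, ← hmul, add_neg_cancel, zero_smul,
        NormedSpace.exp_zero, ContinuousLinearMap.one_apply]
      exact hq
    -- the curve t ↦ exp (t • M) y stays in V
    have hcurve : ∀ t : ℝ, NormedSpace.exp (t • M) y ∈ V :=
      fun t => Submodule.subset_span (hGF (hφG t y hyG))
    -- its derivative at 0 is M y
    have hder : HasDerivAt (fun t : ℝ => NormedSpace.exp (t • M) y) (M y) 0 := by
      have h1 : HasDerivAt (fun t : ℝ => NormedSpace.exp (t • M))
          (NormedSpace.exp ((0 : ℝ) • M) * M) 0 := hasDerivAt_exp_smul_const M 0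
      rw [zero_smul, NormedSpace.exp_zero, one_mul] at h1
      have h2 := h1.clm_apply (hasDerivAt_const (0 : ℝ) y)
      simpa using h2
    -- hence `M y ∈ V` as `V` is closed
    have hMyV : M y ∈ V := by
      have hVclosed : IsClosed (V : Set L) := Submodule.closed_of_finiteDimensional V
      have hslope := hasDerivAt_iff_tendsto_slope.1 hder
      refine hVclosed.mem_of_tendsto hslope (Filter.Eventually.of_forall fun t => ?_)
      have hy0 : NormedSpace.exp ((0 : ℝ) • M) y = y := by
        rw [zero_smul, NormedSpace.exp_zero, ContinuousLinearMap.one_apply]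
      simp only [slope_def_module]
      exact V.smul_mem _ (V.sub_mem (hcurve t) (hy0 ▸ hcurve 0))
    -- finally, M y = B z y = B x y
    have hBzy : B z y = B x y := by
      rw [hz, map_add, LinearMap.add_apply, hBalt y, add_zero]
    have : M y = B z y := rfl
    rw [← hBzy, ← this]
    exact hMyV
  -- extend bilinearly to the span
  have H1 : ∀ u ∈ F, B u b ∈ V := by
    intro u hu
    induction hb using Submodule.span_induction with
    | mem w hw => exact key u hu w hw
    | zero => rw [map_zero]; exact V.zero_mem
    | add w₁ w₂ _ _ h₁ h₂ => rw [map_add]; exact V.add_mem h₁ h₂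
    | smul c w _ hw => rw [map_smul]; exact V.smul_mem c hw
  induction ha using Submodule.span_induction with
  | mem u hu => exact H1 u hu
  | zero => rw [map_zero, LinearMap.zero_apply]; exact V.zero_mem
  | add u₁ u₂ _ _ h₁ h₂ => rw [map_add, LinearMap.add_apply]; exact V.add_mem h₁ h₂
  | smul c u _ hu => rw [map_smul, LinearMap.smul_apply]; exact V.smul_mem c hu
end

section
/- Let L be a finite-dimensional real Lie algebra, η ∈ L, and let Ω ⊆ L be a closed subset with s·Ω ⊆ Ω for all s ≥ 0 and exp(t·ad η)(Ω) = Ω for all t ∈ ℝ. Suppose ξ = ξ₁ + ⋯ + ξ_m ∈ Ω, where ⁅η, ξ_j⁆ = λ_j·ξ_j for real numbers λ₁ < λ₂ < ⋯ < λ_m. Then ξ₁ ∈ Ω and ξ_m ∈ Ω, i.e., both the lowest and the highest eigencomponents of ξ with respect to ad η belong to Ω. -/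
open scoped Pointwise

lemma exp_apply_eigvec {L : Type*} [NormedAddCommGroup L] [NormedSpace ℝ L]
    [CompleteSpace L] (A : L →L[ℝ] L) (c : ℝ) (x : L) (h : A x = c • x) :
    NormedSpace.exp A x = Real.exp c • x := by
  have hpow : ∀ k : ℕ, (A ^ k) x = c ^ k • x := by
    intro k
    induction k with
    | zero => simp
    | succ k ih =>
      rw [pow_succ, pow_succ, ContinuousLinearMap.mul_apply, h, map_smul, ih,
        smul_smul, mul_comm]
  have hs : Summable fun k : ℕ => ((Nat.factorial k : ℝ)⁻¹) • A ^ k :=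
    NormedSpace.expSeries_summable' (𝕂 := ℝ) A
  have hmap := (ContinuousLinearMap.apply ℝ L x).map_tsum hs
  rw [NormedSpace.exp_eq_tsum (𝕂 := ℝ)]
  simp only [ContinuousLinearMap.apply_apply] at hmap
  rw [hmap]
  simp only [ContinuousLinearMap.smul_apply, hpow]
  have heq : ∑' k : ℕ, ((Nat.factorial k : ℝ)⁻¹) • (c ^ k • x)
      = (∑' k : ℕ, (Nat.factorial k : ℝ)⁻¹ • c ^ k) • x := by
    simp_rw [smul_smul]
    rw [Summable.tsum_smul_const]
    · simp [smul_eq_mul]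
    · simpa [smul_eq_mul] using NormedSpace.expSeries_summable' (𝕂 := ℝ) c
  rw [heq]
  congr 1
  rw [Real.exp_eq_exp_ℝ, NormedSpace.exp_eq_tsum (𝕂 := ℝ)]

lemma tendsto_aux {L : Type*} [NormedAddCommGroup L] [NormedSpace ℝ L]
    {N : ℕ} (ξ : Fin N → L) (c : Fin N → ℝ) (m : Fin N) (hc0 : c m = 0)
    (hcneg : ∀ j, j ≠ m → c j < 0) :
    Filter.Tendsto (fun t : ℝ => ∑ j, Real.exp (t * c j) • ξ j)
      Filter.atTop (nhds (ξ m)) := by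
  have hξ : ξ m = ∑ j, (if j = m then ξ m else 0) := by simp
  rw [hξ]
  apply tendsto_finset_sum
  intro j _
  by_cases hj : j = m
  · subst hj; simp [hc0]
  · simp only [hj, if_false]
    have h2 : Filter.Tendsto (fun t : ℝ => t * c j) Filter.atTop Filter.atBot :=
      Filter.Tendsto.atTop_mul_const_of_neg (hcneg j hj) Filter.tendsto_id
    have h1 : Filter.Tendsto (fun t : ℝ => Real.exp (t * c j))
        Filter.atTop (nhds 0) := Real.tendsto_exp_atBot.comp h2
    simpa using h1.smul_const (ξ j)

/-- Let `L` be a finite-dimensional real Lie algebra (a finite-dimensional real vector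
space with a Lie bracket `B`), `η ∈ L`, and `Ω ⊆ L` a closed subset stable under
multiplication by nonnegative scalars and invariant under `exp (t ad η)` for all `t`.
If `ξ = ξ₀ + ⋯ + ξₙ ∈ Ω` with `⁅η, ξⱼ⁆ = λⱼ • ξⱼ` for strictly increasing real numbers
`λ₀ < ⋯ < λₙ`, then the lowest and highest eigencomponents `ξ₀` and `ξₙ` belong to `Ω`. -/
theorem lowest_and_highest_eigencomponent_mem {L : Type*}
    [NormedAddCommGroup L] [NormedSpace ℝ L] [FiniteDimensional ℝ L]
    (B : L →ₗ[ℝ] L →ₗ[ℝ] L)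
    (hBalt : ∀ a : L, B a a = 0)
    (hBjacobi : ∀ a b c : L, B a (B b c) = B (B a b) c + B b (B a c))
    (η : L) (Ω : Set L) (hΩclosed : IsClosed Ω)
    (hΩsmul : ∀ s : ℝ, 0 ≤ s → s • Ω ⊆ Ω)
    (hinv : ∀ t : ℝ,
      ⇑(NormedSpace.exp (LinearMap.toContinuousLinearMap (t • B η))) '' Ω = Ω)
    (n : ℕ) (ξ : Fin (n + 1) → L) (lam : Fin (n + 1) → ℝ)
    (hlam : StrictMono lam)
    (heig : ∀ j, B η (ξ j) = lam j • ξ j)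
    (hsum : (∑ j, ξ j) ∈ Ω) :
    ξ 0 ∈ Ω ∧ ξ (Fin.last n) ∈ Ω := by
  have key : ∀ t : ℝ, (∑ j, Real.exp (t * lam j) • ξ j) ∈ Ω := by
    intro t
    have hA : ∀ j, (LinearMap.toContinuousLinearMap (t • B η)) (ξ j)
        = (t * lam j) • ξ j := by
      intro j
      simp [heig j, smul_smul]
    have hmap : NormedSpace.exp (LinearMap.toContinuousLinearMap (t • B η))
        (∑ j, ξ j) = ∑ j, Real.exp (t * lam j) • ξ j := by
      rw [map_sum]
      exact Finset.sum_congr rfl fun j _ => exp_apply_eigvec _ _ _ (hA j)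
    rw [← hmap, ← hinv t]
    exact Set.mem_image_of_mem _ hsum
  have key2 : ∀ (m : Fin (n + 1)) (t : ℝ),
      (∑ j, Real.exp (t * (lam j - lam m)) • ξ j) ∈ Ω := by
    intro m t
    have hmem := hΩsmul (Real.exp (-(t * lam m))) (Real.exp_nonneg _)
      (Set.smul_mem_smul_set (key t))
    have heq : (Real.exp (-(t * lam m))) • ∑ j, Real.exp (t * lam j) • ξ j
        = ∑ j, Real.exp (t * (lam j - lam m)) • ξ j := by
      rw [Finset.smul_sum]
      refine Finset.sum_congr rfl fun j _ => ?_
      rw [smul_smul, ← Real.exp_add,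
        show -(t * lam m) + t * lam j = t * (lam j - lam m) by ring]
    rw [heq] at hmem
    exact hmem
  constructor
  · have hten := tendsto_aux ξ (fun j => lam 0 - lam j) 0 (by simp)
      (fun j hj => by
        have h := hlam (Fin.pos_of_ne_zero hj)
        simpa using sub_neg.mpr h)
    refine hΩclosed.mem_of_tendsto hten (Filter.Eventually.of_forall fun t => ?_)
    have := key2 0 (-t)
    simpa [show ∀ j, -t * (lam j - lam 0) = t * (lam 0 - lam j) from
      fun j => by ring] using this
  · have hten := tendsto_aux ξ (fun j => lam j - lam (Fin.last n)) (Fin.last n)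
      (by simp)
      (fun j hj => by
        have h : lam j < lam (Fin.last n) :=
          hlam (lt_of_le_of_ne (Fin.le_last j) hj)
        simpa using sub_neg.mpr h)
    exact hΩclosed.mem_of_tendsto hten
      (Filter.Eventually.of_forall fun t => key2 (Fin.last n) t)
end

section
/- Let V be a finite-dimensional real inner product space and C ⊆ V a closed convex cone with nonempty interior which is self-dual (C equals its dual cone) and homogeneous (the group GL(C) of linear automorphisms g of V with g(C) = C acts transitively on the interior of C). Let Ω ⊆ V be a closed convex cone which is pointed (Ω ∩ (−Ω) = {0}), satisfies g(Ω) = Ω for every g ∈ GL(C), and contains at least one interior point of C. Then Ω = C. -/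
open scoped Pointwise RealInnerProductSpace

/-- The adjoint of a linear automorphism of a finite-dimensional real inner product
space, as a linear automorphism. -/
noncomputable def adjointEquiv {V : Type*} [NormedAddCommGroup V] [InnerProductSpace ℝ V]
    [FiniteDimensional ℝ V] (g : V ≃ₗ[ℝ] V) : V ≃ₗ[ℝ] V :=
  LinearEquiv.ofLinear (LinearMap.adjoint (g : V →ₗ[ℝ] V))
    (LinearMap.adjoint (g.symm : V →ₗ[ℝ] V))
    (by
      ext x
      refine ext_inner_left ℝ fun w => ?_
      simp only [LinearMap.coe_comp, Function.comp_apply, LinearMap.id_coe, id_eq]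
      rw [LinearMap.adjoint_inner_right, LinearMap.adjoint_inner_right]
      simp)
    (by
      ext x
      refine ext_inner_left ℝ fun w => ?_
      simp only [LinearMap.coe_comp, Function.comp_apply, LinearMap.id_coe, id_eq]
      rw [LinearMap.adjoint_inner_right, LinearMap.adjoint_inner_right]
      simp)

@[simp] lemma adjointEquiv_apply {V : Type*} [NormedAddCommGroup V] [InnerProductSpace ℝ V]
    [FiniteDimensional ℝ V] (g : V ≃ₗ[ℝ] V) (x : V) :
    adjointEquiv g x = LinearMap.adjoint (g : V →ₗ[ℝ] V) x := rfl

@[simp] lemma adjointEquiv_symm_apply {V : Type*} [NormedAddCommGroup V]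
    [InnerProductSpace ℝ V] [FiniteDimensional ℝ V] (g : V ≃ₗ[ℝ] V) (x : V) :
    (adjointEquiv g).symm x = LinearMap.adjoint (g.symm : V →ₗ[ℝ] V) x := rfl

/-- Let `V` be a finite-dimensional real inner product space and `C ⊆ V` a closed
convex cone with nonempty interior which is self-dual and homogeneous.  If `Ω ⊆ V`
is a closed convex cone which is pointed, invariant under every linear automorphism
preserving `C`, and contains an interior point of `C`, then `Ω = C`. -/
theorem pointed_invariant_cone_eq_symmetric_cone {V : Type*}
    [NormedAddCommGroup V] [InnerProductSpace ℝ V] [FiniteDimensional ℝ V]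
    (C : Set V) (hCclosed : IsClosed C) (hCconvex : Convex ℝ C)
    (hCcone : ∀ c : ℝ, 0 < c → c • C ⊆ C)
    (hCint : (interior C).Nonempty)
    (hCselfdual : {x : V | ∀ y ∈ C, 0 ≤ ⟪x, y⟫} = C)
    (hChom : ∀ x ∈ interior C, ∀ y ∈ interior C,
      ∃ g : V ≃ₗ[ℝ] V, ⇑g '' C = C ∧ g x = y)
    (Ω : Set V) (hΩclosed : IsClosed Ω) (hΩconvex : Convex ℝ Ω)
    (hΩcone : ∀ c : ℝ, 0 < c → c • Ω ⊆ Ω)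
    (hΩpointed : Ω ∩ (-Ω) = {0})
    (hΩinv : ∀ g : V ≃ₗ[ℝ] V, ⇑g '' C = C → ⇑g '' Ω = Ω)
    (hΩint : (Ω ∩ interior C).Nonempty) :
    Ω = C := by
  classical
  -- C is contained in the closure of its interior
  have hCcl : C ⊆ closure (interior C) := by
    obtain ⟨z, hz⟩ := hCint
    intro x hx
    have htend : Filter.Tendsto (fun n : ℕ => x + (1 / (n + 1) : ℝ) • (z - x))
        Filter.atTop (nhds x) := by
      have h0 : Filter.Tendsto (fun n : ℕ => (1 / (n + 1) : ℝ)) Filter.atTop (nhds 0) :=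
        tendsto_one_div_add_atTop_nhds_zero_nat
      have := (h0.smul_const (z - x)).const_add x
      simpa using this
    refine mem_closure_of_tendsto htend ?_
    filter_upwards with n
    refine hCconvex.add_smul_sub_mem_interior hx hz ⟨by positivity, ?_⟩
    rw [div_le_one (by positivity)]
    linarith [Nat.cast_nonneg (α := ℝ) n]
  -- Main step: any closed invariant set touching the interior of C contains C
  have hsub : ∀ S : Set V, IsClosed S →
      (∀ g : V ≃ₗ[ℝ] V, ⇑g '' C = C → ⇑g '' S = S) →
      (S ∩ interior C).Nonempty → C ⊆ S := by
    rintro S hSc hSinv ⟨x, hxS, hxC⟩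
    have hint : interior C ⊆ S := by
      intro y hy
      obtain ⟨g, hgC, hgx⟩ := hChom x hxC y hy
      rw [← hSinv g hgC]
      exact ⟨x, hxS, hgx⟩
    intro y hy
    have : y ∈ closure S := closure_mono hint (hCcl hy)
    rwa [hSc.closure_eq] at this
  have hCΩ : C ⊆ Ω := hsub Ω hΩclosed hΩinv hΩint
  -- symmetry of invariance
  have hsymm : ∀ g : V ≃ₗ[ℝ] V, ⇑g '' C = C → ⇑g.symm '' C = C := by
    intro g hg
    conv_lhs => rw [← hg]
    rw [← Set.image_comp]
    simp
  -- adjoints of automorphisms of C preserve C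
  have hadjmem : ∀ g : V ≃ₗ[ℝ] V, ⇑g '' C = C →
      ∀ x ∈ C, LinearMap.adjoint (g : V →ₗ[ℝ] V) x ∈ C := by
    intro g hg x hx
    rw [← hCselfdual]
    intro y hy
    rw [LinearMap.adjoint_inner_left]
    have hgy : g y ∈ C := hg ▸ Set.mem_image_of_mem _ hy
    have hx' : x ∈ {x : V | ∀ y ∈ C, 0 ≤ ⟪x, y⟫} := hCselfdual.symm ▸ hx
    exact hx' _ hgy
  have hadjC : ∀ g : V ≃ₗ[ℝ] V, ⇑g '' C = C → ⇑(adjointEquiv g) '' C = C := by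
    intro g hg
    apply Set.Subset.antisymm
    · rintro _ ⟨x, hx, rfl⟩
      simpa using hadjmem g hg x hx
    · intro x hx
      refine ⟨(adjointEquiv g).symm x, ?_, (adjointEquiv g).apply_symm_apply x⟩
      simpa using hadjmem g.symm (hsymm g hg) x hx
  -- the dual set of Ω
  haveI : CompleteSpace V := FiniteDimensional.complete ℝ V
  set D : Set V := (ProperCone.innerDual Ω : Set V) with hD
  have hmemD : ∀ x : V, x ∈ D ↔ ∀ y ∈ Ω, 0 ≤ ⟪y, x⟫ := by
    intro x; rw [hD, SetLike.mem_coe]; exact ProperCone.mem_innerDual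
  -- D is invariant
  have hDmem : ∀ g : V ≃ₗ[ℝ] V, ⇑g '' C = C → ∀ x ∈ D, g x ∈ D := by
    intro g hg x hx
    rw [hmemD]
    intro y hy
    have h1 : (⟪(LinearMap.adjoint (g : V →ₗ[ℝ] V)) y, x⟫ : ℝ) = ⟪y, g x⟫ :=
      LinearMap.adjoint_inner_left (g : V →ₗ[ℝ] V) x y
    rw [← h1]
    have hΩadj : ⇑(adjointEquiv g) '' Ω = Ω := hΩinv _ (hadjC g hg)
    have : (adjointEquiv g) y ∈ Ω := hΩadj ▸ Set.mem_image_of_mem _ hy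
    rw [adjointEquiv_apply] at this
    exact (hmemD x).mp hx _ this
  have hDinv : ∀ g : V ≃ₗ[ℝ] V, ⇑g '' C = C → ⇑g '' D = D := by
    intro g hg
    apply Set.Subset.antisymm
    · rintro _ ⟨x, hx, rfl⟩
      exact hDmem g hg x hx
    · intro x hx
      exact ⟨g.symm x, hDmem g.symm (hsymm g hg) x hx, g.apply_symm_apply x⟩
  -- basic facts about D
  have hDclosed : IsClosed D := (ProperCone.innerDual Ω).isClosed
  have hDconv : Convex ℝ D := (ProperCone.innerDual Ω).convex
  have h0Ω : (0 : V) ∈ Ω := by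
    have : (0 : V) ∈ ({0} : Set V) := rfl
    rw [← hΩpointed] at this
    exact this.1
  have h0D : (0 : V) ∈ D := by
    rw [hmemD]; intro y _; simp
  have hDsubC : D ⊆ C := by
    intro x hx
    rw [← hCselfdual]
    intro y hy
    rw [real_inner_comm]
    exact (hmemD x).mp hx y (hCΩ hy)
  -- Ω as a convex cone, and the bipolar theorem
  let K : ConvexCone ℝ V :=
    { carrier := Ω
      smul_mem' := fun c hc x hx => hΩcone c hc (Set.smul_mem_smul_set hx)
      add_mem' := fun x hx y hy => by
        have hm : (1 / 2 : ℝ) • x + (1 / 2 : ℝ) • y ∈ Ω :=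
          hΩconvex hx hy (by norm_num) (by norm_num) (by norm_num)
        have := hΩcone 2 (by norm_num) (Set.smul_mem_smul_set hm)
        rwa [smul_add, smul_smul, smul_smul, show (2 : ℝ) * (1 / 2) = 1 by norm_num,
          one_smul, one_smul] at this }
  have hbip : (ProperCone.innerDual (ProperCone.innerDual (K : Set V) : Set V) : Set V) = K := by
    let P : ProperCone ℝ V :=
      ⟨K.toPointedCone (ConvexCone.Pointed.of_nonempty_of_isClosed ⟨0, h0Ω⟩ hΩclosed), hΩclosed⟩
    exact congrArg SetLike.coe (ProperCone.innerDual_innerDual P)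
  -- D has nonempty interior (using pointedness of Ω)
  have hDint : (interior D).Nonempty := by
    by_contra hempty
    -- the span of D is not the whole space
    have hspan : Submodule.span ℝ D ≠ ⊤ := by
      intro htop
      apply hempty
      rw [hDconv.interior_nonempty_iff_affineSpan_eq_top]
      rw [AffineSubspace.affineSpan_eq_top_iff_vectorSpan_eq_top_of_nonempty ℝ V V ⟨0, h0D⟩,
        vectorSpan_def]
      rw [eq_top_iff, ← htop]
      apply Submodule.span_mono
      intro x hx
      exact ⟨x, hx, 0, h0D, by simp [vsub_eq_sub]⟩
    haveI : CompleteSpace V := FiniteDimensional.complete ℝ V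
    obtain ⟨u, huW, hu0⟩ : ∃ u, u ∈ (Submodule.span ℝ D)ᗮ ∧ u ≠ 0 := by
      rcases Submodule.exists_mem_ne_zero_of_ne_bot
        (p := (Submodule.span ℝ D)ᗮ)
        (by rwa [ne_eq, Submodule.orthogonal_eq_bot_iff]) with ⟨u, hu, h0⟩
      exact ⟨u, hu, h0⟩
    have huorth : ∀ x ∈ D, ⟪x, u⟫ = 0 := fun x hx =>
      (Submodule.mem_orthogonal _ u).mp huW x (Submodule.subset_span hx)
    have hud : ∀ v : V, (∀ x ∈ D, (⟪x, v⟫ : ℝ) = 0) → v ∈ Ω := by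
      intro v hv
      have hv' : v ∈ (ProperCone.innerDual (ProperCone.innerDual (K : Set V) : Set V) : Set V) := by
        rw [SetLike.mem_coe, ProperCone.mem_innerDual]
        intro x hx
        exact le_of_eq (hv x hx).symm
      rw [hbip] at hv'
      exact hv'
    have huΩ : u ∈ Ω := hud u huorth
    have hnuΩ : -u ∈ Ω := hud (-u) fun x hx => by
      rw [inner_neg_right, huorth x hx, neg_zero]
    have : u ∈ Ω ∩ (-Ω) := ⟨huΩ, Set.mem_neg.mpr hnuΩ⟩
    rw [hΩpointed] at this
    exact hu0 this
  -- D contains an interior point of C, hence C ⊆ D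
  have hCD : C ⊆ D := by
    apply hsub D hDclosed hDinv
    obtain ⟨x, hx⟩ := hDint
    exact ⟨x, interior_subset hx, interior_mono hDsubC hx⟩
  -- conclude Ω ⊆ C
  have hΩC : Ω ⊆ C := by
    intro z hz
    rw [← hCselfdual]
    intro y hy
    exact (hmemD y).mp (hCD hy) z hz
  exact Set.Subset.antisymm hΩC hCΩ
end

section
/- Let V be a finite-dimensional real vector space, A a linear endomorphism of V, and V = V₀ ⊕ V₁ ⊕ V₂ a decomposition into eigenspaces of A with A = j·id on V_j for j = 0, 1, 2. Let Ω ⊆ V be a closed, pointed convex cone with exp(tA)(Ω) = Ω for all t ∈ ℝ, and suppose Ω ∩ V₁ = {0}. Then Ω ∩ V₂ is a face of Ω. -/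
open scoped Pointwise

lemma exp_apply_eigen {V : Type*} [NormedAddCommGroup V] [NormedSpace ℝ V]
    [CompleteSpace V] (B : V →L[ℝ] V) (c : ℝ) (v : V) (h : B v = c • v) :
    NormedSpace.exp B v = Real.exp c • v := by
  have hpow : ∀ n : ℕ, (B ^ n) v = c ^ n • v := by
    intro n
    induction n with
    | zero => simp
    | succ n ih =>
      rw [pow_succ', pow_succ']
      simp only [ContinuousLinearMap.mul_apply, ih, map_smul, h, smul_smul, mul_comm]
  have hsum : Summable fun n : ℕ => ((n.factorial : ℝ))⁻¹ • B ^ n :=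
    NormedSpace.expSeries_summable' B
  have key := (ContinuousLinearMap.apply ℝ V v).map_tsum hsum
  simp only [ContinuousLinearMap.apply_apply] at key
  have hsc : Summable fun n : ℕ => ((n.factorial : ℝ))⁻¹ * c ^ n := by
    simpa [smul_eq_mul] using NormedSpace.expSeries_summable' (𝕂 := ℝ) c
  rw [NormedSpace.exp_eq_tsum ℝ, key]
  simp only [ContinuousLinearMap.smul_apply, hpow, smul_smul]
  rw [hsc.tsum_smul_const]
  congr 1
  rw [Real.exp_eq_exp_ℝ, NormedSpace.exp_eq_tsum ℝ]
  simp [smul_eq_mul]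

lemma limit_aux {V : Type*} [NormedAddCommGroup V] [NormedSpace ℝ V]
    {Ω : Set V} (hΩclosed : IsClosed Ω) (a b c : V)
    (h : ∀ s : ℝ, 0 < s → a + s • b + s ^ 2 • c ∈ Ω) : a ∈ Ω := by
  have htend : Filter.Tendsto (fun s : ℝ => a + s • b + s ^ 2 • c)
      (nhdsWithin 0 (Set.Ioi 0)) (nhds a) := by
    have hcont : Continuous fun s : ℝ => a + s • b + s ^ 2 • c := by
      continuity
    have := hcont.tendsto 0
    simp only [zero_smul, add_zero, ne_eq, OfNat.ofNat_ne_zero, not_false_eq_true,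
      zero_pow] at this
    exact this.mono_left nhdsWithin_le_nhds
  exact hΩclosed.mem_of_tendsto htend
    (Filter.eventually_of_mem self_mem_nhdsWithin fun s hs => h s hs)

/-- Let `V` be a finite-dimensional real vector space, `A` an endomorphism of `V`, and
`V = V₀ ⊕ V₁ ⊕ V₂` a decomposition into eigenspaces of `A` with `A = j·id` on `Vⱼ`.
If `Ω ⊆ V` is a closed pointed convex cone with `exp (t A) Ω = Ω` for all `t` and
`Ω ∩ V₁ = {0}`, then `Ω ∩ V₂` is a face of `Ω`. -/
theorem inter_top_eigenspace_isFace {V : Type*}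
    [NormedAddCommGroup V] [NormedSpace ℝ V] [FiniteDimensional ℝ V]
    (A : V →ₗ[ℝ] V) (V₀ V₁ V₂ : Submodule ℝ V)
    (hdirect : DirectSum.IsInternal ![V₀, V₁, V₂])
    (h0 : ∀ v ∈ V₀, A v = (0 : ℝ) • v)
    (h1 : ∀ v ∈ V₁, A v = (1 : ℝ) • v)
    (h2 : ∀ v ∈ V₂, A v = (2 : ℝ) • v)
    (Ω : Set V) (hΩclosed : IsClosed Ω) (hΩconvex : Convex ℝ Ω)
    (hΩcone : ∀ c : ℝ, 0 < c → c • Ω ⊆ Ω)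
    (hΩpointed : Ω ∩ (-Ω) = {0})
    (hinv : ∀ t : ℝ,
      ⇑(NormedSpace.exp (LinearMap.toContinuousLinearMap (t • A))) '' Ω = Ω)
    (hV₁ : Ω ∩ (V₁ : Set V) = {0}) :
    Convex ℝ (Ω ∩ (V₂ : Set V)) ∧ IsExtreme ℝ Ω (Ω ∩ (V₂ : Set V)) := by
  -- decomposition existence and independence
  have hsup : V₀ ⊔ V₁ ⊔ V₂ = ⊤ := by
    rw [← hdirect.submodule_iSup_eq_top]
    apply le_antisymm
    · exact sup_le (sup_le (le_iSup ![V₀, V₁, V₂] 0) (le_iSup ![V₀, V₁, V₂] 1))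
        (le_iSup ![V₀, V₁, V₂] 2)
    · refine iSup_le fun i => ?_
      fin_cases i
      · exact le_sup_of_le_left le_sup_left
      · exact le_sup_of_le_left le_sup_right
      · exact le_sup_right
  have hdecomp : ∀ x : V, ∃ a ∈ V₀, ∃ b ∈ V₁, ∃ c ∈ V₂, x = a + b + c := by
    intro x
    have hx : x ∈ V₀ ⊔ V₁ ⊔ V₂ := hsup ▸ Submodule.mem_top
    obtain ⟨y, hy, c, hc, rfl⟩ := Submodule.mem_sup.1 hx
    obtain ⟨a, ha, b, hb, rfl⟩ := Submodule.mem_sup.1 hy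
    exact ⟨a, ha, b, hb, c, hc, rfl⟩
  have hindep := hdirect.submodule_iSupIndep
  have huniq : ∀ a ∈ V₀, ∀ b ∈ V₁, ∀ c ∈ V₂, a + b + c = 0 →
      a = 0 ∧ b = 0 ∧ c = 0 := by
    intro a ha b hb c hc habc
    have h12 : V₁ ⊔ V₂ ≤ ⨆ j, ⨆ (_ : j ≠ 0), ![V₀, V₁, V₂] j :=
      sup_le (le_iSup_of_le 1 (le_iSup_of_le (by decide) le_rfl))
        (le_iSup_of_le 2 (le_iSup_of_le (by decide) le_rfl))
    have ha0 : a = 0 := by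
      have hmem : a ∈ V₀ ⊓ (V₁ ⊔ V₂) := by
        refine ⟨ha, ?_⟩
        have : a = -(b + c) := by linear_combination (norm := module) habc
        rw [this]
        exact neg_mem (add_mem (Submodule.mem_sup_left hb) (Submodule.mem_sup_right hc))
      have := (hindep 0).mono_right h12
      simpa using this.le_bot hmem
    have hbc : b = -c := by
      rw [ha0] at habc; linear_combination (norm := module) habc
    have hb0 : b = 0 := by
      have hle : V₂ ≤ ⨆ j, ⨆ (_ : j ≠ 1), ![V₀, V₁, V₂] j :=
        le_iSup_of_le 2 (le_iSup_of_le (by decide) le_rfl)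
      have hmem : b ∈ V₁ ⊓ (⨆ j, ⨆ (_ : j ≠ 1), ![V₀, V₁, V₂] j) :=
        ⟨hb, hbc ▸ hle (neg_mem hc)⟩
      exact (hindep 1).le_bot hmem
    refine ⟨ha0, hb0, ?_⟩
    rw [ha0, hb0] at habc; simpa using habc
  -- key: flow membership
  have hflow : ∀ x ∈ Ω, ∀ a ∈ V₀, ∀ b ∈ V₁, ∀ c ∈ V₂, x = a + b + c →
      ∀ s : ℝ, 0 < s → a + s • b + s ^ 2 • c ∈ Ω := by
    intro x hx a ha b hb c hc hxeq s hs
    set t : ℝ := Real.log s with ht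
    set B : V →L[ℝ] V := LinearMap.toContinuousLinearMap (t • A) with hB
    have hBa : B a = (0 : ℝ) • a := by
      simp [hB, h0 a ha, smul_smul]
    have hBb : B b = t • b := by
      simp [hB, h1 b hb]
    have hBc : B c = (2 * t) • c := by
      simp [hB, h2 c hc, smul_smul, mul_comm]
    have hea := exp_apply_eigen B 0 a hBa
    have heb := exp_apply_eigen B t b hBb
    have hec := exp_apply_eigen B (2 * t) c hBc
    have hmem : NormedSpace.exp B x ∈ Ω := by
      rw [← hinv t]
      exact Set.mem_image_of_mem _ hx
    rw [hxeq, map_add, map_add, hea, heb, hec] at hmem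
    have he1 : Real.exp t = s := Real.exp_log hs
    have he2 : Real.exp (2 * t) = s ^ 2 := by
      rw [two_mul, Real.exp_add, he1, sq]
    rw [he1, he2, Real.exp_zero, one_smul] at hmem
    exact hmem
  -- main extreme-point argument
  have hface : ∀ x ∈ Ω, ∀ y ∈ Ω, ∀ z ∈ Ω ∩ (V₂ : Set V),
      z ∈ openSegment ℝ x y → x ∈ Ω ∩ (V₂ : Set V) := by
    intro x hx y hy z hz hseg
    obtain ⟨p, q, hp, hq, hpq, hz'⟩ := hseg
    obtain ⟨x₀, hx₀, x₁, hx₁, x₂, hx₂, hxdec⟩ := hdecomp x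
    obtain ⟨y₀, hy₀, y₁, hy₁, y₂, hy₂, hydec⟩ := hdecomp y
    -- component equations
    have hcomp := huniq (p • x₀ + q • y₀) (add_mem (V₀.smul_mem p hx₀) (V₀.smul_mem q hy₀))
      (p • x₁ + q • y₁) (add_mem (V₁.smul_mem p hx₁) (V₁.smul_mem q hy₁))
      (p • x₂ + q • y₂ - z) (sub_mem (add_mem (V₂.smul_mem p hx₂) (V₂.smul_mem q hy₂)) hz.2)
      (by
        have : p • x + q • y = z := hz'
        rw [hxdec, hydec] at this
        linear_combination (norm := module) this)
    obtain ⟨hc0, hc1, -⟩ := hcomp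
    -- x₀, y₀ ∈ Ω
    have hx₀Ω : x₀ ∈ Ω := limit_aux hΩclosed x₀ x₁ x₂
      (fun s hs => hflow x hx x₀ hx₀ x₁ hx₁ x₂ hx₂ hxdec s hs)
    have hy₀Ω : y₀ ∈ Ω := limit_aux hΩclosed y₀ y₁ y₂
      (fun s hs => hflow y hy y₀ hy₀ y₁ hy₁ y₂ hy₂ hydec s hs)
    -- x₀ = 0
    have hx₀0 : x₀ = 0 := by
      have hneg : -x₀ = (p⁻¹ * q) • y₀ := by
        have hp' : p ≠ 0 := ne_of_gt hp
        apply smul_right_injective V hp'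
        show p • (-x₀) = p • ((p⁻¹ * q) • y₀)
        rw [smul_neg, smul_smul, ← mul_assoc, mul_inv_cancel₀ hp', one_mul]
        exact neg_eq_of_add_eq_zero_right hc0
      have hnegΩ : -x₀ ∈ Ω := by
        rw [hneg]
        exact hΩcone (p⁻¹ * q) (mul_pos (inv_pos.2 hp) hq)
          (Set.smul_mem_smul_set hy₀Ω)
      have : x₀ ∈ Ω ∩ (-Ω) := ⟨hx₀Ω, Set.mem_neg.2 hnegΩ⟩
      rw [hΩpointed] at this
      exact this
    -- x₁ ∈ Ω hence = 0
    have hx₁Ω : x₁ ∈ Ω := by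
      apply limit_aux hΩclosed x₁ x₂ 0
      intro s hs
      have hmem := hflow x hx x₀ hx₀ x₁ hx₁ x₂ hx₂ hxdec s hs
      rw [hx₀0, zero_add] at hmem
      have := hΩcone s⁻¹ (inv_pos.2 hs) (Set.smul_mem_smul_set hmem)
      have heq : s⁻¹ • (s • x₁ + s ^ 2 • x₂) = x₁ + s • x₂ + s ^ 2 • (0 : V) := by
        have hs' : s ≠ 0 := ne_of_gt hs
        rw [smul_add, smul_smul, smul_smul, inv_mul_cancel₀ hs', one_smul, sq,
          ← mul_assoc, inv_mul_cancel₀ hs', one_mul, smul_zero, add_zero]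
      rwa [heq] at this
    have hx₁0 : x₁ = 0 := by
      have : x₁ ∈ Ω ∩ (V₁ : Set V) := ⟨hx₁Ω, hx₁⟩
      rw [hV₁] at this
      exact this
    refine ⟨hx, ?_⟩
    rw [hxdec, hx₀0, hx₁0, zero_add, zero_add]
    exact hx₂
  constructor
  · exact hΩconvex.inter V₂.convex
  · constructor
    · exact Set.inter_subset_left
    · intro x hx y hy z hz hseg
      exact hface x hx y hy z hz hseg
end
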